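/- Let l be a nonzero integer, N = 12l² − 1, and B = (12l² − 1)²(1 − 3l²). Then the point P = (12l² − 1, 3(12l² − 1)l) lies on the curve y² = x³ + B, and [3]P has integer coordinates with x([3]P) = 576l⁶ − 288l⁴ + 36l² − 1. -/

import Mathlib

/-- The Mordell curve `y² = x³ + B` as a Weierstrass curve over `ℚ`. -/
def Mordell (B : ℚ) : WeierstrassCurve.Affine ℚ :=
  { a₁ := 0, a₂ := 0, a₃ := 0, a₄ := 0, a₆ := B }

/-- `B` is sixth-power-free: no sixth power of a prime divides it. -/
def SixthPowerFree (B : ℤ) : Prop := ∀ p : ℕ, p.Prime → ¬ ((p : ℤ) ^ 6 ∣ B)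

/-- A rational point on the Mordell curve is integral if it is affine with
integer coordinates. -/
def IsIntegralPoint {B : ℚ} (P : (Mordell B).Point) : Prop :=
  ∃ (x y : ℚ) (h : (Mordell B).Nonsingular x y),
    P = WeierstrassCurve.Affine.Point.some x y h ∧ x.den = 1 ∧ y.den = 1

/-!
The tangent to `y² = x³ + B` at `P = (N, 3Nl)`, `N = 12l² - 1`, has slope `N / (2l)`, which gives
`2P = (N - N / (4l²), N² / (8l³) - 3Nl)`. The chord through `2P` and `P` then has slope
`24l³ - N / (2l)`, in which the denominators cancel, so the third intersection point `-3P` is a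
polynomial in `l`.
-/

open WeierstrassCurve.Affine

lemma WeierstrassCurve.Affine.Point.some_add_some_eq {F : Type*} [Field F] [DecidableEq F]
    {W : WeierstrassCurve.Affine F} {x₁ y₁ x₂ y₂ x₃ y₃ : F}
    (h₁ : W.Nonsingular x₁ y₁) (h₂ : W.Nonsingular x₂ y₂)
    (hxy : ¬(x₁ = x₂ ∧ y₁ = W.negY x₂ y₂))
    (hx₃ : W.addX x₁ x₂ (W.slope x₁ x₂ y₁ y₂) = x₃)
    (hy₃ : W.addY x₁ x₂ y₁ (W.slope x₁ x₂ y₁ y₂) = y₃) :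
    ∃ h₃ : W.Nonsingular x₃ y₃, Point.some _ _ h₁ + Point.some _ _ h₂ = Point.some _ _ h₃ := by
  subst hx₃ hy₃
  exact ⟨_, Point.add_some hxy⟩

namespace Mordell

variable {B : ℚ}

lemma negY_eq (x y : ℚ) : (Mordell B).negY x y = -y := by
  simp [negY, Mordell]

lemma addX_eq (x₁ x₂ L : ℚ) : (Mordell B).addX x₁ x₂ L = L ^ 2 - x₁ - x₂ := by
  simp [addX, Mordell]

lemma addY_eq (x₁ x₂ y₁ L : ℚ) :
    (Mordell B).addY x₁ x₂ y₁ L = -(L * (L ^ 2 - x₁ - x₂ - x₁) + y₁) := by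
  rw [addY, negAddY, negY_eq, addX_eq]

lemma some_add_self_of_slope {x y L x₂ y₂ : ℚ} (h : (Mordell B).Nonsingular x y) (hy : y ≠ 0)
    (hL : 2 * y * L = 3 * x ^ 2) (hx₂ : x₂ = L ^ 2 - 2 * x) (hy₂ : y₂ = -(L * (x₂ - x) + y)) :
    ∃ h₂ : (Mordell B).Nonsingular x₂ y₂,
      Point.some _ _ h + Point.some _ _ h = Point.some _ _ h₂ := by
  have hy' : y ≠ (Mordell B).negY x y := by
    rw [negY_eq]
    intro hc
    exact hy (by linarith)
  have hslope : (Mordell B).slope x x y y = L := by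
    have h2y : y - -y ≠ 0 := by rwa [sub_neg_eq_add, ← two_mul, mul_ne_zero_iff_left two_ne_zero]
    rw [slope_of_Y_ne rfl hy', negY_eq, div_eq_iff h2y]
    simp only [Mordell]
    linear_combination -hL
  refine Point.some_add_some_eq h h (fun hc => hy' hc.2) ?_ ?_
  · rw [hslope, addX_eq, hx₂]; ring
  · rw [hslope, addY_eq, hy₂, hx₂]; ring

lemma some_add_some_of_slope {x₁ y₁ x₂ y₂ L x₃ y₃ : ℚ} (h₁ : (Mordell B).Nonsingular x₁ y₁)
    (h₂ : (Mordell B).Nonsingular x₂ y₂) (hx : x₁ ≠ x₂) (hL : (x₁ - x₂) * L = y₁ - y₂)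
    (hx₃ : x₃ = L ^ 2 - x₁ - x₂) (hy₃ : y₃ = -(L * (x₃ - x₁) + y₁)) :
    ∃ h₃ : (Mordell B).Nonsingular x₃ y₃,
      Point.some _ _ h₁ + Point.some _ _ h₂ = Point.some _ _ h₃ := by
  have hslope : (Mordell B).slope x₁ x₂ y₁ y₂ = L := by
    rw [slope_of_X_ne hx, div_eq_iff (sub_ne_zero.mpr hx), ← hL, mul_comm]
  refine Point.some_add_some_eq h₁ h₂ (fun hc => hx hc.1) ?_ ?_
  · rw [hslope, addX_eq, hx₃]
  · rw [hslope, addY_eq, hy₃, hx₃]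

end Mordell

lemma three_zsmul_some_twelve_sq_sub_one {l : ℚ} (hl : l ≠ 0) (hN : 12 * l ^ 2 - 1 ≠ 0)
    (h : (Mordell ((12 * l ^ 2 - 1) ^ 2 * (1 - 3 * l ^ 2))).Nonsingular
      (12 * l ^ 2 - 1) (3 * (12 * l ^ 2 - 1) * l)) :
    ∃ h₃ : (Mordell ((12 * l ^ 2 - 1) ^ 2 * (1 - 3 * l ^ 2))).Nonsingular
        (576 * l ^ 6 - 288 * l ^ 4 + 36 * l ^ 2 - 1)
        (-13824 * l ^ 9 + 10368 * l ^ 7 - 2592 * l ^ 5 + 252 * l ^ 3 - 9 * l),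
      (3 : ℤ) • Point.some _ _ h = Point.some _ _ h₃ := by
  set N := 12 * l ^ 2 - 1
  obtain ⟨h₂, hP₂⟩ := Mordell.some_add_self_of_slope (L := N / (2 * l)) (x₂ := N - N / (4 * l ^ 2))
    (y₂ := N ^ 2 / (8 * l ^ 3) - 3 * N * l) h (by positivity) (by field_simp)
    (by field_simp; ring) (by field_simp; ring)
  have hx : N - N / (4 * l ^ 2) ≠ N := by
    rw [Ne, sub_eq_self]
    positivity
  obtain ⟨h₃, hP₃⟩ := Mordell.some_add_some_of_slope (L := 24 * l ^ 3 - N / (2 * l))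
    (x₃ := 576 * l ^ 6 - 288 * l ^ 4 + 36 * l ^ 2 - 1)
    (y₃ := -13824 * l ^ 9 + 10368 * l ^ 7 - 2592 * l ^ 5 + 252 * l ^ 3 - 9 * l) h₂ h hx
    (by field_simp; ring) (by field_simp; ring) (by field_simp; ring)
  refine ⟨h₃, ?_⟩
  rw [show (3 : ℤ) = 1 + 1 + 1 by norm_num, add_zsmul, add_zsmul, one_zsmul, hP₂, hP₃]

theorem stmt_14 (l : ℤ) (hl : l ≠ 0) :
    ((3 * (12 * (l : ℚ) ^ 2 - 1) * l) ^ 2 =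
        (12 * (l : ℚ) ^ 2 - 1) ^ 3 + (12 * (l : ℚ) ^ 2 - 1) ^ 2 * (1 - 3 * (l : ℚ) ^ 2)) ∧
    ∀ h : (Mordell ((12 * (l : ℚ) ^ 2 - 1) ^ 2 * (1 - 3 * (l : ℚ) ^ 2))).Nonsingular
        (12 * (l : ℚ) ^ 2 - 1) (3 * (12 * (l : ℚ) ^ 2 - 1) * l),
      ∃ (y : ℚ)
        (h3 : (Mordell ((12 * (l : ℚ) ^ 2 - 1) ^ 2 * (1 - 3 * (l : ℚ) ^ 2))).Nonsingular
          (576 * (l : ℚ) ^ 6 - 288 * (l : ℚ) ^ 4 + 36 * (l : ℚ) ^ 2 - 1) y),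
        (3 : ℤ) • WeierstrassCurve.Affine.Point.some _ _ h =
            WeierstrassCurve.Affine.Point.some _ _ h3 ∧ y.den = 1 := by
  refine ⟨by ring, fun h => ?_⟩
  have hN : 12 * (l : ℚ) ^ 2 - 1 ≠ 0 := by
    have : (1 : ℚ) ≤ (l : ℚ) ^ 2 := by
      exact_mod_cast (one_le_sq_iff_one_le_abs l).mpr (Int.one_le_abs hl)
    linarith
  obtain ⟨h₃, hP₃⟩ := three_zsmul_some_twelve_sq_sub_one (by exact_mod_cast hl) hN h
  refine ⟨_, h₃, hP₃, ?_⟩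
  have hy :
      ((-13824 * l ^ 9 + 10368 * l ^ 7 - 2592 * l ^ 5 + 252 * l ^ 3 - 9 * l : ℤ) : ℚ).den = 1 :=
    Rat.den_intCast _
  exact_mod_cast hy
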